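/- Under the nonlinear fixed-point iteration setup and RRE setup with ε_n ≠ 0, suppose ‖W̃⁺‖·‖ε_n‖ ≤ η, ‖W̃⁺‖·‖W − W̃‖ ≤ Δ₀ < 1, and additionally that s̃_{n,k} = s (as happens when k equals the degree of the minimal polynomial of F̃ with respect to ε_n). Then there exists τ > 0 depending only on a, L, η, Δ₀ such that ‖s_{n,k} − s‖ ≤ τ·(Lⁿ‖ε₀‖ + C_n‖ε₀‖²)², where C_n = a·L^{n−1}·(1 − Lⁿ)/(1 − L) for n ≥ 1 and C₀ = 0. -/

import Mathlib

open scoped Matrix Matrix.Norms.L2Operator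

/-- Moore–Penrose inverse of a full-column-rank matrix: `K⁺ = (KᴴK)⁻¹Kᴴ`. -/
noncomputable def pinv {m n : ℕ} (A : Matrix (Fin m) (Fin n) ℂ) : Matrix (Fin n) (Fin m) ℂ :=
  (Aᴴ * A)⁻¹ * Aᴴ

/-- A matrix acting on Euclidean vectors. -/
noncomputable def appE {m n : ℕ} (A : Matrix (Fin m) (Fin n) ℂ)
    (v : EuclideanSpace ℂ (Fin n)) : EuclideanSpace ℂ (Fin m) :=
  Matrix.toEuclideanLin A v

/-- The `N×k` matrix `U` with columns the first differences `u_{n+j} = x_{n+j+1} − x_{n+j}`,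
`j = 0,…,k−1`. -/
noncomputable def Umat (N k n : ℕ) (x : ℕ → EuclideanSpace ℂ (Fin N)) :
    Matrix (Fin N) (Fin k) ℂ :=
  Matrix.of fun p j => (x (n + (j : ℕ) + 1) - x (n + (j : ℕ))) p

/-- The `N×k` matrix `W` with columns the second differences
`w_{n+j} = u_{n+j+1} − u_{n+j}`, `j = 0,…,k−1`. -/
noncomputable def Wmat (N k n : ℕ) (x : ℕ → EuclideanSpace ℂ (Fin N)) :
    Matrix (Fin N) (Fin k) ℂ :=
  Matrix.of fun p j =>
    ((x (n + (j : ℕ) + 2) - x (n + (j : ℕ) + 1))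
      - (x (n + (j : ℕ) + 1) - x (n + (j : ℕ)))) p

/-- The `N×k` matrix `Ũ` with columns `ũ_{n+j} = F̃ʲ(F̃ − I) ε_n` coming from the linear
iteration `x̃_n = x_n`, `x̃_{m+1} = s + F̃(x̃_m − s)`. -/
noncomputable def UmatT (N k : ℕ)
    (F : EuclideanSpace ℂ (Fin N) →L[ℂ] EuclideanSpace ℂ (Fin N))
    (ε : EuclideanSpace ℂ (Fin N)) : Matrix (Fin N) (Fin k) ℂ :=
  Matrix.of fun p j => ((F ^ (j : ℕ) * (F - 1)) ε) p

/-- The `N×k` matrix `W̃` with columns `w̃_{n+j} = F̃ʲ(F̃ − I)² ε_n` coming from the linear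
iteration `x̃_n = x_n`, `x̃_{m+1} = s + F̃(x̃_m − s)`. -/
noncomputable def WmatT (N k : ℕ)
    (F : EuclideanSpace ℂ (Fin N) →L[ℂ] EuclideanSpace ℂ (Fin N))
    (ε : EuclideanSpace ℂ (Fin N)) : Matrix (Fin N) (Fin k) ℂ :=
  Matrix.of fun p j =>
    ((F ^ (j : ℕ) * (F - 1) ^ 2 :
      EuclideanSpace ℂ (Fin N) →L[ℂ] EuclideanSpace ℂ (Fin N)) ε) p

/-- The RRE approximation `s_{n,k} = x_n − U W⁺ u_n`. -/
noncomputable def sRRE (N k n : ℕ) (x : ℕ → EuclideanSpace ℂ (Fin N)) :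
    EuclideanSpace ℂ (Fin N) :=
  x n - appE (Umat N k n x) (appE (pinv (Wmat N k n x)) (x (n + 1) - x n))

/-- The RRE approximation `s̃_{n,k} = x_n − Ũ W̃⁺ ũ_n` for the linear iteration
`x̃_n = x_n`, `x̃_{m+1} = s + F̃(x̃_m − s)`, whose first difference at `n` is
`ũ_n = (F̃ − I)(x_n − s)`. -/
noncomputable def sRREt (N k n : ℕ)
    (F : EuclideanSpace ℂ (Fin N) →L[ℂ] EuclideanSpace ℂ (Fin N))
    (s : EuclideanSpace ℂ (Fin N)) (x : ℕ → EuclideanSpace ℂ (Fin N)) :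
    EuclideanSpace ℂ (Fin N) :=
  x n - appE (UmatT N k F (x n - s))
    (appE (pinv (WmatT N k F (x n - s))) ((F - 1) (x n - s)))

/-- `C₀ = 0` and `C_n = a·L^{n−1}·(1 − Lⁿ)/(1 − L)` for `n ≥ 1`. -/
noncomputable def Cconst (a L : ℝ) : ℕ → ℝ
  | 0 => 0
  | n + 1 => a * L ^ n * (1 - L ^ (n + 1)) / (1 - L)

/-!
Write `ε = x_n - s`. The hypothesis `s̃_{n,k} = s` says `ε = Ũ g` for `g = W̃⁺ ũ_n`; as the
columns of `W̃` are `F̃ - I` applied to those of `Ũ`, also `W̃ g = ũ_n`. Hence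
`s_{n,k} - s = (Ũ - U) g + U W⁺ ((W - W̃) g + ũ_n - u_n)`.
Since `W W⁺` is an orthogonal projection, `(1 - Δ₀) ‖W⁺ y‖ ≤ ‖W̃⁺‖ ‖y‖`, and `‖W̃⁺‖ ‖ε‖ ≤ η`
gives `‖g‖ ≤ 2η`. The iterates `x_{n+m}` stay within `a m L^(m-1) ‖ε‖²` of the linearized
iterates `s + F̃ᵐ ε`, so `U - Ũ` and `W - W̃` are `O(‖ε‖²)` and `U` is `O(‖ε‖)`; summing over the
columns costs the factors `∑ Lᵐ` and `∑ m L^(m-1)`, which do not depend on `k`. Altogether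
`‖s_{n,k} - s‖ ≤ τ ‖ε‖²`, and `‖ε‖ ≤ Lⁿ ‖ε₀‖`.
-/

open Finset

theorem hasSum_coe_mul_pow_pred {r : ℝ} (hr0 : 0 ≤ r) (hr1 : r < 1) :
    HasSum (fun m : ℕ => (m : ℝ) * r ^ (m - 1)) (1 / (1 - r) ^ 2) := by
  rw [← hasSum_nat_add_iff' 1]
  have := hasSum_choose_mul_geometric_of_norm_lt_one 1
    (by rwa [Real.norm_eq_abs, abs_of_nonneg hr0] : ‖r‖ < 1)
  simpa [add_comm] using this

theorem sum_range_add_le_of_hasSum {g : ℕ → ℝ} {S : ℝ} (hg : HasSum g S) (hg0 : ∀ m, 0 ≤ g m)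
    (i k : ℕ) : ∑ j ∈ range k, g (j + i) ≤ S := by
  have := sum_le_hasSum (Ico i (i + k)) (fun m _ => hg0 m) hg
  rw [sum_Ico_eq_sum_range, Nat.add_sub_cancel_left] at this
  simpa only [add_comm i] using this

theorem Matrix.toEuclideanLin_apply_eq_sum {𝕜 : Type*} [RCLike 𝕜] {m n : Type*} [Fintype n]
    [DecidableEq n] (A : Matrix m n 𝕜) (v : EuclideanSpace 𝕜 n) :
    Matrix.toEuclideanLin A v = ∑ j, v j • WithLp.toLp 2 (fun i => A i j) := by
  ext i
  simp [Matrix.toLpLin_apply, Matrix.mulVec, dotProduct, mul_comm]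

theorem Matrix.l2_opNorm_le_sum_norm_col {𝕜 : Type*} [RCLike 𝕜] {m n : Type*} [Fintype m]
    [Fintype n] [DecidableEq n] (A : Matrix m n 𝕜) :
    ‖A‖ ≤ ∑ j, ‖(WithLp.toLp 2 (fun i => A i j) : EuclideanSpace 𝕜 m)‖ := by
  rw [Matrix.l2_opNorm_def]
  refine ContinuousLinearMap.opNorm_le_bound _ (by positivity) fun v => ?_
  change ‖Matrix.toEuclideanLin A v‖ ≤ _
  rw [Matrix.toEuclideanLin_apply_eq_sum, sum_mul]
  refine (norm_sum_le _ _).trans (sum_le_sum fun j _ => ?_)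
  rw [norm_smul, mul_comm]
  gcongr
  exact PiLp.norm_apply_le v j

theorem Matrix.isUnit_of_rank_eq_card {K n : Type*} [Field K] [Fintype n] [DecidableEq n]
    {A : Matrix n n K} (h : A.rank = Fintype.card n) : IsUnit A := by
  rw [← Matrix.mulVec_surjective_iff_isUnit]
  change Function.Surjective A.mulVecLin
  rw [← LinearMap.range_eq_top]
  apply Submodule.eq_top_of_finrank_eq
  rw [← Matrix.rank, h, Module.finrank_fintype_fun_eq_card]

section appE

variable {m n l : ℕ}

theorem norm_appE_le (A : Matrix (Fin m) (Fin n) ℂ) (v : EuclideanSpace ℂ (Fin n)) :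
    ‖appE A v‖ ≤ ‖A‖ * ‖v‖ :=
  Matrix.l2_opNorm_mulVec A v

@[simp] theorem appE_one (v : EuclideanSpace ℂ (Fin n)) : appE 1 v = v := by
  simp [appE]

theorem appE_mul (A : Matrix (Fin m) (Fin n) ℂ) (B : Matrix (Fin n) (Fin l) ℂ)
    (v : EuclideanSpace ℂ (Fin l)) : appE (A * B) v = appE A (appE B v) := by
  simp [appE, Matrix.toLpLin_apply, Matrix.mulVec_mulVec]

theorem appE_sub_left (A B : Matrix (Fin m) (Fin n) ℂ) (v : EuclideanSpace ℂ (Fin n)) :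
    appE (A - B) v = appE A v - appE B v := by
  simp [appE]

theorem appE_sub_right (A : Matrix (Fin m) (Fin n) ℂ) (u v : EuclideanSpace ℂ (Fin n)) :
    appE A (u - v) = appE A u - appE A v := by
  simp [appE]

end appE

section Pinv

variable {N k : ℕ} {W W' : Matrix (Fin N) (Fin k) ℂ} {Δ₀ : ℝ}

open ComplexOrder in
theorem pinv_mul_self (hW : W.rank = k) : pinv W * W = 1 := by
  have : IsUnit (Wᴴ * W) := Matrix.isUnit_of_rank_eq_card <| by
    rw [Matrix.rank_conjTranspose_mul_self, hW, Fintype.card_fin]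
  rw [pinv, Matrix.mul_assoc, Matrix.nonsing_inv_mul _ ((Matrix.isUnit_iff_isUnit_det _).mp this)]

theorem appE_pinv_appE (hW : W.rank = k) (v : EuclideanSpace ℂ (Fin k)) :
    appE (pinv W) (appE W v) = v := by
  rw [← appE_mul, pinv_mul_self hW, appE_one]

theorem norm_mul_pinv_le_one (hW : W.rank = k) : ‖W * pinv W‖ ≤ 1 := by
  refine IsStarProjection.norm_le _ ⟨?_, ?_⟩
  · rw [IsIdempotentElem, Matrix.mul_assoc, ← Matrix.mul_assoc (pinv W), pinv_mul_self hW,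
      Matrix.one_mul]
  · rw [IsSelfAdjoint, Matrix.star_eq_conjTranspose, pinv, Matrix.conjTranspose_mul,
      Matrix.conjTranspose_mul, Matrix.conjTranspose_conjTranspose,
      Matrix.conjTranspose_nonsing_inv, Matrix.conjTranspose_mul,
      Matrix.conjTranspose_conjTranspose, Matrix.mul_assoc]

theorem one_sub_mul_norm_appE_pinv_le (hW : W.rank = k) (hW' : W'.rank = k)
    (hΔ : ‖pinv W'‖ * ‖W - W'‖ ≤ Δ₀) (y : EuclideanSpace ℂ (Fin N)) :
    (1 - Δ₀) * ‖appE (pinv W) y‖ ≤ ‖pinv W'‖ * ‖y‖ := by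
  set z := appE (pinv W) y
  have hW'z : appE W' z = appE (W * pinv W) y - appE (W - W') z := by
    rw [appE_sub_left, appE_mul]; abel
  have hz : ‖z‖ ≤ ‖pinv W'‖ * (‖y‖ + ‖W - W'‖ * ‖z‖) := calc
    ‖z‖ = ‖appE (pinv W') (appE W' z)‖ := by rw [appE_pinv_appE hW']
    _ ≤ ‖pinv W'‖ * ‖appE W' z‖ := norm_appE_le _ _
    _ ≤ ‖pinv W'‖ * (‖y‖ + ‖W - W'‖ * ‖z‖) := by
      rw [hW'z]
      gcongr
      refine (norm_sub_le _ _).trans (add_le_add ?_ (norm_appE_le _ _))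
      exact (norm_appE_le _ _).trans
        (mul_le_of_le_one_left (norm_nonneg _) (norm_mul_pinv_le_one hW))
  nlinarith [mul_le_mul_of_nonneg_right hΔ (norm_nonneg z)]

theorem appE_sub_appE_pinv_eq (hW : W.rank = k) (U U' : Matrix (Fin N) (Fin k) ℂ)
    (g : EuclideanSpace ℂ (Fin k)) (u : EuclideanSpace ℂ (Fin N)) :
    appE U' g - appE U (appE (pinv W) u)
      = appE (U' - U) g + appE U (appE (pinv W) (appE W g - u)) := by
  rw [appE_sub_right (pinv W), appE_pinv_appE hW, appE_sub_right, appE_sub_left]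
  abel

theorem norm_appE_sub_appE_pinv_le (hW : W.rank = k) (hW' : W'.rank = k)
    (hΔ : ‖pinv W'‖ * ‖W - W'‖ ≤ Δ₀) (hΔ₀ : Δ₀ < 1) (U U' : Matrix (Fin N) (Fin k) ℂ)
    (g : EuclideanSpace ℂ (Fin k)) (u : EuclideanSpace ℂ (Fin N)) :
    ‖appE U' g - appE U (appE (pinv W) u)‖
      ≤ ‖U - U'‖ * ‖g‖
        + ‖U‖ * (‖pinv W'‖ * (‖W - W'‖ * ‖g‖ + ‖appE W' g - u‖) / (1 - Δ₀)) := by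
  have hres : ‖appE W g - u‖ ≤ ‖W - W'‖ * ‖g‖ + ‖appE W' g - u‖ := by
    rw [show appE W g - u = appE (W - W') g + (appE W' g - u) by rw [appE_sub_left]; abel]
    exact (norm_add_le _ _).trans (add_le_add_left (norm_appE_le _ _) _)
  have hcoef : ‖appE (pinv W) (appE W g - u)‖
      ≤ ‖pinv W'‖ * (‖W - W'‖ * ‖g‖ + ‖appE W' g - u‖) / (1 - Δ₀) := by
    rw [le_div_iff₀ (by linarith), mul_comm]
    exact (one_sub_mul_norm_appE_pinv_le hW hW' hΔ _).trans (by gcongr)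
  rw [appE_sub_appE_pinv_eq hW, norm_sub_rev U]
  refine (norm_add_le _ _).trans (add_le_add (norm_appE_le _ _) ?_)
  exact (norm_appE_le _ _).trans (by gcongr)

end Pinv

section FixedPointIteration

variable {E : Type*} [NormedAddCommGroup E] {f : E → E} {s : E} {δ L : ℝ} {x : ℕ → E}

theorem norm_sub_le_pow_mul_of_lipschitz (hL0 : 0 ≤ L) (hL1 : L ≤ 1) (hfix : f s = s)
    (hLip : ∀ y z, ‖y - s‖ ≤ δ → ‖z - s‖ ≤ δ → ‖f y - f z‖ ≤ L * ‖y - z‖)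
    (hx0 : ‖x 0 - s‖ ≤ δ) (hx : ∀ m, x (m + 1) = f (x m)) (m : ℕ) :
    ‖x m - s‖ ≤ L ^ m * ‖x 0 - s‖ := by
  have hs : ‖s - s‖ ≤ δ := by simpa using (norm_nonneg _).trans hx0
  induction m with
  | zero => simp
  | succ m ih =>
    have hxm : ‖x m - s‖ ≤ δ :=
      ih.trans ((mul_le_of_le_one_left (norm_nonneg _) (pow_le_one₀ hL0 hL1)).trans hx0)
    calc ‖x (m + 1) - s‖ = ‖f (x m) - f s‖ := by rw [hx, hfix]
      _ ≤ L * ‖x m - s‖ := hLip _ _ hxm hs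
      _ ≤ L ^ (m + 1) * ‖x 0 - s‖ := by rw [pow_succ', mul_assoc]; gcongr

variable {𝕜 : Type*} [NontriviallyNormedField 𝕜] [NormedSpace 𝕜 E] {F : E →L[𝕜] E} {a : ℝ}

theorem norm_sub_one_apply_le (hF : ‖F‖ ≤ L) (hL1 : L ≤ 1) (v : E) : ‖(F - 1) v‖ ≤ 2 * ‖v‖ := by
  rw [sub_apply, one_apply_eq_self, two_mul]
  exact (norm_sub_le _ _).trans (add_le_add_left ((F.le_opNorm v).trans
    (mul_le_of_le_one_left (norm_nonneg v) (hF.trans hL1))) _)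

theorem norm_sub_sub_pow_apply_le (hL0 : 0 ≤ L) (hL1 : L ≤ 1) (ha : 0 ≤ a) (hF : ‖F‖ ≤ L)
    (hdecay : ∀ m, ‖x m - s‖ ≤ L ^ m * ‖x 0 - s‖)
    (hquad : ∀ m, ‖x (m + 1) - s - F (x m - s)‖ ≤ a * ‖x m - s‖ ^ 2) (m : ℕ) :
    ‖x m - s - (F ^ m) (x 0 - s)‖ ≤ a * ‖x 0 - s‖ ^ 2 * (m * L ^ (m - 1)) := by
  induction m with
  | zero => simp
  | succ m ih =>
    have hsplit : x (m + 1) - s - (F ^ (m + 1)) (x 0 - s)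
        = (x (m + 1) - s - F (x m - s)) + F (x m - s - (F ^ m) (x 0 - s)) := by
      rw [map_sub F (x m - s), pow_succ', mul_apply_eq_comp]; abel
    have hsq : ‖x m - s‖ ^ 2 ≤ L ^ m * ‖x 0 - s‖ ^ 2 := calc
      ‖x m - s‖ ^ 2 ≤ (L ^ m * ‖x 0 - s‖) ^ 2 := by gcongr; exact hdecay m
      _ = L ^ m * L ^ m * ‖x 0 - s‖ ^ 2 := by ring
      _ ≤ L ^ m * ‖x 0 - s‖ ^ 2 := by
        gcongr; exact mul_le_of_le_one_right (by positivity) (pow_le_one₀ hL0 hL1)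
    have hpow : L * (m * L ^ (m - 1)) = m * L ^ m := by
      cases m with
      | zero => simp
      | succ m => rw [Nat.add_sub_cancel, pow_succ]; ring
    rw [hsplit, Nat.add_sub_cancel]
    calc _ ≤ a * ‖x m - s‖ ^ 2 + L * (a * ‖x 0 - s‖ ^ 2 * (m * L ^ (m - 1))) :=
          (norm_add_le _ _).trans (add_le_add (hquad m)
            ((F.le_opNorm _).trans (mul_le_mul hF ih (norm_nonneg _) hL0)))
      _ = a * ‖x m - s‖ ^ 2 + a * ‖x 0 - s‖ ^ 2 * (m * L ^ m) := by rw [← hpow]; ring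
      _ ≤ a * (L ^ m * ‖x 0 - s‖ ^ 2) + a * ‖x 0 - s‖ ^ 2 * (m * L ^ m) := by gcongr
      _ = a * ‖x 0 - s‖ ^ 2 * (↑(m + 1) * L ^ m) := by push_cast; ring

end FixedPointIteration

theorem pow_mul_sub_one {R : Type*} [Ring R] (a : R) (j : ℕ) :
    a ^ j * (a - 1) = a ^ (j + 1) - a ^ j := by
  rw [mul_sub, mul_one, pow_succ]

theorem pow_mul_sub_one_sq {R : Type*} [Ring R] (a : R) (j : ℕ) :
    a ^ j * (a - 1) ^ 2 = (a ^ (j + 2) - a ^ (j + 1)) - (a ^ (j + 1) - a ^ j) := by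
  rw [sq, ← mul_assoc, pow_mul_sub_one, sub_mul, pow_mul_sub_one, pow_mul_sub_one]

section Columns

variable {N k n : ℕ} {F : EuclideanSpace ℂ (Fin N) →L[ℂ] EuclideanSpace ℂ (Fin N)}
  {s : EuclideanSpace ℂ (Fin N)} {x : ℕ → EuclideanSpace ℂ (Fin N)}

theorem col_Umat (j : Fin k) :
    (WithLp.toLp 2 (fun i => Umat N k n x i j) : EuclideanSpace ℂ (Fin N))
      = (x (n + j + 1) - s) - (x (n + j) - s) := by
  rw [sub_sub_sub_cancel_right]; rfl

theorem col_Umat_sub_UmatT (j : Fin k) :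
    (WithLp.toLp 2 (fun i => (Umat N k n x - UmatT N k F (x n - s)) i j) : EuclideanSpace ℂ (Fin N))
      = (x (n + j + 1) - s - (F ^ ((j : ℕ) + 1)) (x n - s))
        - (x (n + j) - s - (F ^ (j : ℕ)) (x n - s)) := by
  change (x (n + j + 1) - x (n + j)) - (F ^ (j : ℕ) * (F - 1)) (x n - s) = _
  rw [pow_mul_sub_one, sub_apply]
  abel

theorem col_Wmat_sub_WmatT (j : Fin k) :
    (WithLp.toLp 2 (fun i => (Wmat N k n x - WmatT N k F (x n - s)) i j) : EuclideanSpace ℂ (Fin N))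
      = ((x (n + j + 2) - s - (F ^ ((j : ℕ) + 2)) (x n - s))
          - (x (n + j + 1) - s - (F ^ ((j : ℕ) + 1)) (x n - s)))
        - ((x (n + j + 1) - s - (F ^ ((j : ℕ) + 1)) (x n - s))
          - (x (n + j) - s - (F ^ (j : ℕ)) (x n - s))) := by
  change ((x (n + j + 2) - x (n + j + 1)) - (x (n + j + 1) - x (n + j)))
    - (F ^ (j : ℕ) * (F - 1) ^ 2 : EuclideanSpace ℂ (Fin N) →L[ℂ] EuclideanSpace ℂ (Fin N))
      (x n - s) = _
  rw [pow_mul_sub_one_sq]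
  simp only [sub_apply]
  abel

theorem appE_WmatT (ε : EuclideanSpace ℂ (Fin N)) (z : EuclideanSpace ℂ (Fin k)) :
    appE (WmatT N k F ε) z = (F - 1) (appE (UmatT N k F ε) z) := by
  simp only [appE, Matrix.toEuclideanLin_apply_eq_sum, map_sum, map_smul]
  congr! 2 with j
  change (F ^ (j : ℕ) * (F - 1) ^ 2 : EuclideanSpace ℂ (Fin N) →L[ℂ] EuclideanSpace ℂ (Fin N)) ε
    = (F - 1) ((F ^ (j : ℕ) * (F - 1)) ε)
  have hcomm : Commute (F - 1) (F ^ (j : ℕ)) :=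
    ((Commute.refl F).pow_right _).sub_left (Commute.one_left _)
  rw [← mul_apply_eq_comp, ← mul_assoc, hcomm.eq, mul_assoc, ← sq]

end Columns

section DifferenceMatrices

variable {N k : ℕ} {D : ℕ → EuclideanSpace ℂ (Fin N)} {g : ℕ → ℝ} {c S : ℝ}

theorem sum_range_norm_add_le (hc : 0 ≤ c) (hg : HasSum g S) (hg0 : ∀ m, 0 ≤ g m)
    (hD : ∀ m, ‖D m‖ ≤ c * g m) (i k : ℕ) : ∑ j ∈ range k, ‖D (j + i)‖ ≤ c * S := calc
  ∑ j ∈ range k, ‖D (j + i)‖ ≤ ∑ j ∈ range k, c * g (j + i) := sum_le_sum fun j _ => hD _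
  _ ≤ c * S := by
    rw [← mul_sum]; exact mul_le_mul_of_nonneg_left (sum_range_add_le_of_hasSum hg hg0 i k) hc

theorem norm_le_of_col_eq_sub {A : Matrix (Fin N) (Fin k) ℂ}
    (hA : ∀ j : Fin k, WithLp.toLp 2 (fun i => A i j) = D (j + 1) - D j)
    (hc : 0 ≤ c) (hg : HasSum g S) (hg0 : ∀ m, 0 ≤ g m) (hD : ∀ m, ‖D m‖ ≤ c * g m) :
    ‖A‖ ≤ 2 * (c * S) := calc
  ‖A‖ ≤ ∑ j ∈ range k, ‖D (j + 1) - D (j + 0)‖ := by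
    refine A.l2_opNorm_le_sum_norm_col.trans_eq ?_
    rw [← Fin.sum_univ_eq_sum_range (fun j => ‖D (j + 1) - D (j + 0)‖)]
    exact sum_congr rfl fun j _ => by rw [hA]; rfl
  _ ≤ ∑ j ∈ range k, ‖D (j + 1)‖ + ∑ j ∈ range k, ‖D (j + 0)‖ := by
    rw [← sum_add_distrib]; exact sum_le_sum fun j _ => norm_sub_le _ _
  _ ≤ 2 * (c * S) := by
    linarith [sum_range_norm_add_le hc hg hg0 hD 1 k, sum_range_norm_add_le hc hg hg0 hD 0 k]

theorem norm_le_of_col_eq_sub_sub {A : Matrix (Fin N) (Fin k) ℂ}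
    (hA : ∀ j : Fin k, WithLp.toLp 2 (fun i => A i j) = (D (j + 2) - D (j + 1)) - (D (j + 1) - D j))
    (hc : 0 ≤ c) (hg : HasSum g S) (hg0 : ∀ m, 0 ≤ g m) (hD : ∀ m, ‖D m‖ ≤ c * g m) :
    ‖A‖ ≤ 4 * (c * S) := calc
  ‖A‖ ≤ ∑ j ∈ range k, ‖(D (j + 2) - D (j + 1)) - (D (j + 1) - D (j + 0))‖ := by
    refine A.l2_opNorm_le_sum_norm_col.trans_eq ?_
    rw [← Fin.sum_univ_eq_sum_range (fun j => ‖(D (j + 2) - D (j + 1)) - (D (j + 1) - D (j + 0))‖)]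
    exact sum_congr rfl fun j _ => by rw [hA]; rfl
  _ ≤ ∑ j ∈ range k, ‖D (j + 2)‖ + 2 * ∑ j ∈ range k, ‖D (j + 1)‖ + ∑ j ∈ range k, ‖D (j + 0)‖ := by
    rw [mul_sum, ← sum_add_distrib, ← sum_add_distrib]
    refine sum_le_sum fun j _ => ?_
    have h₁ := norm_sub_le (D (j + 2) - D (j + 1)) (D (j + 1) - D (j + 0))
    have h₂ := norm_sub_le (D (j + 2)) (D (j + 1))
    have h₃ := norm_sub_le (D (j + 1)) (D (j + 0))
    linarith
  _ ≤ 4 * (c * S) := by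
    linarith [sum_range_norm_add_le hc hg hg0 hD 2 k, sum_range_norm_add_le hc hg hg0 hD 1 k,
      sum_range_norm_add_le hc hg hg0 hD 0 k]

end DifferenceMatrices

theorem Cconst_nonneg {a L : ℝ} (ha : 0 ≤ a) (hL0 : 0 ≤ L) (hL1 : L < 1) (n : ℕ) :
    0 ≤ Cconst a L n := by
  cases n with
  | zero => exact le_rfl
  | succ n =>
    have : L ^ (n + 1) ≤ 1 := pow_le_one₀ hL0 hL1.le
    have : 0 < 1 - L := by linarith
    unfold Cconst
    exact div_nonneg (mul_nonneg (by positivity) (by linarith)) this.le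

section RRE

variable {N k n : ℕ} {F : EuclideanSpace ℂ (Fin N) →L[ℂ] EuclideanSpace ℂ (Fin N)}
  {s : EuclideanSpace ℂ (Fin N)} {x : ℕ → EuclideanSpace ℂ (Fin N)} {L a η Δ₀ : ℝ}

theorem norm_Umat_le (hL0 : 0 ≤ L) (hL1 : L < 1)
    (hdecay : ∀ j, ‖x (n + j) - s‖ ≤ L ^ j * ‖x n - s‖) :
    ‖Umat N k n x‖ ≤ 2 * (‖x n - s‖ * (1 - L)⁻¹) :=
  norm_le_of_col_eq_sub (D := fun j => x (n + j) - s) col_Umat (norm_nonneg _)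
    (hasSum_geometric_of_lt_one hL0 hL1) (pow_nonneg hL0) fun j => by
      rw [mul_comm]; exact hdecay j

theorem norm_Umat_sub_UmatT_le (hL0 : 0 ≤ L) (hL1 : L < 1) (ha : 0 ≤ a)
    (hdefect : ∀ j : ℕ, ‖x (n + j) - s - (F ^ j) (x n - s)‖
      ≤ a * ‖x n - s‖ ^ 2 * (j * L ^ (j - 1))) :
    ‖Umat N k n x - UmatT N k F (x n - s)‖ ≤ 2 * (a * ‖x n - s‖ ^ 2 * (1 / (1 - L) ^ 2)) :=
  norm_le_of_col_eq_sub (D := fun j => x (n + j) - s - (F ^ j) (x n - s))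
    col_Umat_sub_UmatT (by positivity) (hasSum_coe_mul_pow_pred hL0 hL1)
    (fun _ => mul_nonneg (Nat.cast_nonneg _) (pow_nonneg hL0 _)) hdefect

theorem norm_Wmat_sub_WmatT_le (hL0 : 0 ≤ L) (hL1 : L < 1) (ha : 0 ≤ a)
    (hdefect : ∀ j : ℕ, ‖x (n + j) - s - (F ^ j) (x n - s)‖
      ≤ a * ‖x n - s‖ ^ 2 * (j * L ^ (j - 1))) :
    ‖Wmat N k n x - WmatT N k F (x n - s)‖ ≤ 4 * (a * ‖x n - s‖ ^ 2 * (1 / (1 - L) ^ 2)) :=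
  norm_le_of_col_eq_sub_sub (D := fun j => x (n + j) - s - (F ^ j) (x n - s))
    col_Wmat_sub_WmatT (by positivity) (hasSum_coe_mul_pow_pred hL0 hL1)
    (fun _ => mul_nonneg (Nat.cast_nonneg _) (pow_nonneg hL0 _)) hdefect

theorem sub_eq_appE_UmatT_of_sRREt_eq (hst : sRREt N k n F s x = s) :
    x n - s = appE (UmatT N k F (x n - s))
      (appE (pinv (WmatT N k F (x n - s))) ((F - 1) (x n - s))) := by
  rw [sRREt, sub_eq_iff_eq_add] at hst
  exact sub_eq_iff_eq_add'.mpr hst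

-- The two summands bound `‖U - Ũ‖ ‖g‖` and `‖U‖ ‖W⁺ (W g - u_n)‖` divided by `‖ε_n‖²`,
-- where `g = W̃⁺ ũ_n`.
noncomputable def rreConst (a L η Δ₀ : ℝ) : ℝ :=
  4 * a * η / (1 - L) ^ 2 + 2 * a * η * (8 * η / (1 - L) ^ 2 + 1) / ((1 - L) * (1 - Δ₀))

theorem rreConst_pos (ha : 0 < a) (hη : 0 < η) (hL1 : L < 1) (hΔ₀ : Δ₀ < 1) :
    0 < rreConst a L η Δ₀ := by
  have : 0 < 1 - L := by linarith
  have : 0 < 1 - Δ₀ := by linarith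
  unfold rreConst; positivity

theorem norm_sRRE_sub_le (hL0 : 0 ≤ L) (hL1 : L < 1) (ha : 0 ≤ a) (hΔ₀ : Δ₀ < 1)
    (hF : ‖F‖ ≤ L) (hdecay : ∀ j, ‖x (n + j) - s‖ ≤ L ^ j * ‖x n - s‖)
    (hdefect : ∀ j : ℕ, ‖x (n + j) - s - (F ^ j) (x n - s)‖
      ≤ a * ‖x n - s‖ ^ 2 * (j * L ^ (j - 1)))
    (hW : (Wmat N k n x).rank = k) (hW' : (WmatT N k F (x n - s)).rank = k)
    (hη : ‖pinv (WmatT N k F (x n - s))‖ * ‖x n - s‖ ≤ η)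
    (hΔ : ‖pinv (WmatT N k F (x n - s))‖ * ‖Wmat N k n x - WmatT N k F (x n - s)‖ ≤ Δ₀)
    (hst : sRREt N k n F s x = s) :
    ‖sRRE N k n x - s‖ ≤ rreConst a L η Δ₀ * ‖x n - s‖ ^ 2 := by
  set ε := x n - s
  set e := ‖ε‖
  set P' := pinv (WmatT N k F ε)
  set g := appE P' ((F - 1) ε)
  have hε : ε = appE (UmatT N k F ε) g := sub_eq_appE_UmatT_of_sRREt_eq hst
  have hg : ‖g‖ ≤ 2 * η := calc
    ‖g‖ ≤ ‖P'‖ * (2 * e) :=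
      (norm_appE_le _ _).trans (by gcongr; exact norm_sub_one_apply_le hF hL1.le ε)
    _ ≤ 2 * η := by linarith
  have hres : ‖appE (WmatT N k F ε) g - (x (n + 1) - x n)‖ ≤ a * e ^ 2 := by
    have hD₁ : -((F - 1) ε - (x (n + 1) - x n)) = x (n + 1) - s - (F ^ 1) ε := by
      rw [pow_one, sub_apply, one_apply_eq_self]; simp only [ε]; abel
    rw [appE_WmatT, ← hε, ← norm_neg, hD₁]
    simpa using hdefect 1
  have hsplit : sRRE N k n x - s = appE (UmatT N k F ε) g
      - appE (Umat N k n x) (appE (pinv (Wmat N k n x)) (x (n + 1) - x n)) := by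
    rw [sRRE, ← hε]; simp only [ε]; abel
  have h1L : 0 < 1 - L := by linarith
  have h1Δ : 0 < 1 - Δ₀ := by linarith
  have hη0 : 0 ≤ η := (by positivity : 0 ≤ ‖P'‖ * e).trans hη
  rw [hsplit]
  calc _ ≤ ‖Umat N k n x - UmatT N k F ε‖ * ‖g‖ + ‖Umat N k n x‖
        * (‖P'‖ * (‖Wmat N k n x - WmatT N k F ε‖ * ‖g‖
          + ‖appE (WmatT N k F ε) g - (x (n + 1) - x n)‖) / (1 - Δ₀)) :=
        norm_appE_sub_appE_pinv_le hW hW' hΔ hΔ₀ _ _ _ _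
    _ ≤ 2 * (a * e ^ 2 * (1 / (1 - L) ^ 2)) * (2 * η) + 2 * (e * (1 - L)⁻¹)
        * (‖P'‖ * (4 * (a * e ^ 2 * (1 / (1 - L) ^ 2)) * (2 * η) + a * e ^ 2) / (1 - Δ₀)) := by
        gcongr
        · exact norm_Umat_sub_UmatT_le hL0 hL1 ha hdefect
        · exact norm_Umat_le hL0 hL1 hdecay
        · exact norm_Wmat_sub_WmatT_le hL0 hL1 ha hdefect
    _ = 4 * a * η / (1 - L) ^ 2 * e ^ 2
        + 2 * a * (8 * η / (1 - L) ^ 2 + 1) / ((1 - L) * (1 - Δ₀)) * (‖P'‖ * e) * e ^ 2 := by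
        field_simp; ring
    _ ≤ 4 * a * η / (1 - L) ^ 2 * e ^ 2
        + 2 * a * (8 * η / (1 - L) ^ 2 + 1) / ((1 - L) * (1 - Δ₀)) * η * e ^ 2 := by gcongr
    _ = rreConst a L η Δ₀ * e ^ 2 := by unfold rreConst; ring

end RRE

theorem rre_mcmode_step_bound_general (L a η Δ₀ : ℝ)
    (hL0 : 0 < L) (hL1 : L < 1) (ha : 0 < a) (hη : 0 < η)
    (hΔ₀1 : Δ₀ < 1) :
    ∃ τ : ℝ, 0 < τ ∧
      ∀ (N : ℕ), 1 ≤ N → ∀ (s : EuclideanSpace ℂ (Fin N)) (δ : ℝ), 0 < δ →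
      ∀ (f : EuclideanSpace ℂ (Fin N) → EuclideanSpace ℂ (Fin N)), f s = s →
      (∀ x y : EuclideanSpace ℂ (Fin N),
        ‖x - s‖ ≤ δ → ‖y - s‖ ≤ δ → ‖f x - f y‖ ≤ L * ‖x - y‖) →
      ∀ (F : EuclideanSpace ℂ (Fin N) →L[ℂ] EuclideanSpace ℂ (Fin N)), ‖F‖ ≤ L →
      (∀ x : EuclideanSpace ℂ (Fin N),
        ‖x - s‖ ≤ δ → ‖f x - s - F (x - s)‖ ≤ a * ‖x - s‖ ^ 2) →
      ∀ (x : ℕ → EuclideanSpace ℂ (Fin N)), ‖x 0 - s‖ ≤ δ →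
      (∀ m, x (m + 1) = f (x m)) →
      ∀ n k : ℕ, 1 ≤ k → x n ≠ s →
      (Wmat N k n x).rank = k → (WmatT N k F (x n - s)).rank = k →
      ‖pinv (WmatT N k F (x n - s))‖ * ‖x n - s‖ ≤ η →
      ‖pinv (WmatT N k F (x n - s))‖ * ‖Wmat N k n x - WmatT N k F (x n - s)‖ ≤ Δ₀ →
      sRREt N k n F s x = s →
      ‖sRRE N k n x - s‖ ≤
        τ * (L ^ n * ‖x 0 - s‖ + Cconst a L n * ‖x 0 - s‖ ^ 2) ^ 2 := by
  have hτ := rreConst_pos ha hη hL1 hΔ₀1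
  refine ⟨rreConst a L η Δ₀, hτ, ?_⟩
  intro N _ s δ _ f hfix hLip F hF hquad x hx0 hx n k _ _ hW hW' hηn hΔ hst
  have hdecay := norm_sub_le_pow_mul_of_lipschitz hL0.le hL1.le hfix hLip hx0 hx
  have hball (m : ℕ) : ‖x m - s‖ ≤ δ :=
    (hdecay m).trans <|
      (mul_le_of_le_one_left (norm_nonneg _) (pow_le_one₀ hL0.le hL1.le)).trans hx0
  have hdecay_n := norm_sub_le_pow_mul_of_lipschitz (x := fun j => x (n + j))
    hL0.le hL1.le hfix hLip (hball n) fun j => hx (n + j)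
  have hdefect_n := norm_sub_sub_pow_apply_le (x := fun j => x (n + j)) hL0.le hL1.le ha.le hF
    hdecay_n fun j => by have := hquad _ (hball (n + j)); rwa [← hx] at this
  calc ‖sRRE N k n x - s‖ ≤ rreConst a L η Δ₀ * ‖x n - s‖ ^ 2 :=
        norm_sRRE_sub_le hL0.le hL1 ha.le hΔ₀1 hF hdecay_n hdefect_n hW hW' hηn hΔ hst
    _ ≤ _ := by
      gcongr
      exact (hdecay n).trans (le_add_of_nonneg_right
        (mul_nonneg (Cconst_nonneg ha.le hL0.le hL1 n) (sq_nonneg _)))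

/-- Under the nonlinear fixed-point iteration and RRE setup with
`ε_n ≠ 0`, `‖W̃⁺‖·‖ε_n‖ ≤ η`, `‖W̃⁺‖·‖W − W̃‖ ≤ Δ₀ < 1`, and `s̃_{n,k} = s`, there
is `τ > 0` depending only on `a, L, η, Δ₀` such that
`‖s_{n,k} − s‖ ≤ τ·(Lⁿ‖ε₀‖ + C_n‖ε₀‖²)²`. -/
theorem rre_mcmode_step_bound (L a η Δ₀ : ℝ)
    (hL0 : 0 < L) (hL1 : L < 1) (ha : 0 < a) (hη : 0 < η)
    (hΔ₀0 : 0 ≤ Δ₀) (hΔ₀1 : Δ₀ < 1) :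
    ∃ τ : ℝ, 0 < τ ∧
      ∀ (N : ℕ), 1 ≤ N → ∀ (s : EuclideanSpace ℂ (Fin N)) (δ : ℝ), 0 < δ →
      ∀ (f : EuclideanSpace ℂ (Fin N) → EuclideanSpace ℂ (Fin N)), f s = s →
      (∀ x y : EuclideanSpace ℂ (Fin N),
        ‖x - s‖ ≤ δ → ‖y - s‖ ≤ δ → ‖f x - f y‖ ≤ L * ‖x - y‖) →
      ∀ (F : EuclideanSpace ℂ (Fin N) →L[ℂ] EuclideanSpace ℂ (Fin N)), ‖F‖ ≤ L →
      (∀ x : EuclideanSpace ℂ (Fin N),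
        ‖x - s‖ ≤ δ → ‖f x - s - F (x - s)‖ ≤ a * ‖x - s‖ ^ 2) →
      ∀ (x : ℕ → EuclideanSpace ℂ (Fin N)), ‖x 0 - s‖ ≤ δ →
      (∀ m, x (m + 1) = f (x m)) →
      ∀ n k : ℕ, 1 ≤ k → x n ≠ s →
      (Wmat N k n x).rank = k → (WmatT N k F (x n - s)).rank = k →
      ‖pinv (WmatT N k F (x n - s))‖ * ‖x n - s‖ ≤ η →
      ‖pinv (WmatT N k F (x n - s))‖ * ‖Wmat N k n x - WmatT N k F (x n - s)‖ ≤ Δ₀ →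
      sRREt N k n F s x = s →
      ‖sRRE N k n x - s‖ ≤
        τ * (L ^ n * ‖x 0 - s‖ + Cconst a L n * ‖x 0 - s‖ ^ 2) ^ 2 :=
  rre_mcmode_step_bound_general L a η Δ₀ hL0 hL1 ha hη hΔ₀1
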